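/- (Measure of the subdifferential controlled by the jumps.) In the star setup, assume every (d−1)-dimensional face of the triangulation containing 0 is contained in exactly two simplices of 𝒦, and let ℱ(0) denote the (finite) set of such faces. For F ∈ ℱ(0) shared by K⁺, K⁻ ∈ 𝒦 with unit normal n_F pointing from K⁺ towards K⁻, let J_F(γ) := ⟨∇(γ|_{K⁻}) − ∇(γ|_{K⁺}), n_F⟩ be the jump of the gradient across F. Then there is a constant C depending only on d such that the d-dimensional Lebesgue measure of the local subdifferential satisfies |∂γ(0)| ≤ C ( ∑_{F ∈ ℱ(0)} J_F(γ) )^d. -/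

import Mathlib

open Set Metric MeasureTheory Filter
open scoped RealInnerProductSpace

noncomputable section

/-- The closed simplex with vertex set `{0} ∪ S`. -/
def splx {d : ℕ} (S : Finset (EuclideanSpace ℝ (Fin d))) : Set (EuclideanSpace ℝ (Fin d)) :=
  convexHull ℝ (insert (0 : EuclideanSpace ℝ (Fin d)) (S : Set (EuclideanSpace ℝ (Fin d))))

/-- **Star setup**: a conforming finite collection of `d`-simplices sharing the vertex `0`
whose union is a neighborhood of `0`, together with a convex function `γ` vanishing at `0`
which is affine on each simplex.  Each simplex is recorded by its finset `S` of nonzero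
vertices, the simplex itself being `conv({0} ∪ S)`. -/
structure StarSetup (d : ℕ) where
  /-- The collection of (vertex sets of) `d`-simplices of the star. -/
  K : Finset (Finset (EuclideanSpace ℝ (Fin d)))
  /-- The piecewise affine convex function. -/
  γ : EuclideanSpace ℝ (Fin d) → ℝ
  K_nonempty : K.Nonempty
  card_eq : ∀ S ∈ K, S.card = d
  zero_not_mem : ∀ S ∈ K, (0 : EuclideanSpace ℝ (Fin d)) ∉ S
  affine_indep : ∀ S ∈ K, AffineIndependent ℝ
    (fun p : (insert (0 : EuclideanSpace ℝ (Fin d)) (S : Set (EuclideanSpace ℝ (Fin d))) :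
      Set (EuclideanSpace ℝ (Fin d))) => (p : EuclideanSpace ℝ (Fin d)))
  conforming : ∀ S₁ ∈ K, ∀ S₂ ∈ K, splx S₁ ∩ splx S₂ =
    convexHull ℝ (insert (0 : EuclideanSpace ℝ (Fin d))
      ((S₁ : Set (EuclideanSpace ℝ (Fin d))) ∩ (S₂ : Set (EuclideanSpace ℝ (Fin d)))))
  nhd : (⋃ S ∈ K, splx S) ∈ nhds (0 : EuclideanSpace ℝ (Fin d))
  convex_γ : ConvexOn ℝ Set.univ γ
  γ_zero : γ 0 = 0
  affine_on : ∀ S ∈ K, ∃ (p : EuclideanSpace ℝ (Fin d)) (c : ℝ),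
    ∀ x ∈ splx S, γ x = ⟪p, x⟫ + c

namespace StarSetup

variable {d : ℕ} (st : StarSetup d)

/-- The star `ω = ⋃_{K ∈ 𝒦} K` around the origin. -/
def ω : Set (EuclideanSpace ℝ (Fin d)) := ⋃ S ∈ st.K, splx S

/-- The set of nonzero vertices `Z` of the star. -/
def Z : Set (EuclideanSpace ℝ (Fin d)) := ⋃ S ∈ st.K, (S : Set (EuclideanSpace ℝ (Fin d)))

/-- The local subdifferential `∂γ(0) = { w : ⟨w, x⟩ ≤ γ(x) for all x ∈ ω }`. -/
def subdiff : Set (EuclideanSpace ℝ (Fin d)) :=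
  { w | ∀ x ∈ st.ω, ⟪w, x⟫ ≤ st.γ x }

/-- `S` records a face `conv({0} ∪ S)` of the triangulation containing `0`. -/
def IsFace (S : Finset (EuclideanSpace ℝ (Fin d))) : Prop :=
  ∃ S' ∈ st.K, S ⊆ S'

/-- The dual set `T* = { w ∈ ∂γ(0) : ⟨w, z⟩ = γ(z) for all z ∈ T }` of the face
`T = conv({0} ∪ S)`. -/
def dual (S : Finset (EuclideanSpace ℝ (Fin d))) : Set (EuclideanSpace ℝ (Fin d)) :=
  { w ∈ st.subdiff | ∀ z ∈ splx S, ⟪w, z⟫ = st.γ z }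

/-- `N(T) = ⋃ { K ∈ 𝒦 : T ⊆ K }` for the face `T = conv({0} ∪ S)`. -/
def N (S : Finset (EuclideanSpace ℝ (Fin d))) : Set (EuclideanSpace ℝ (Fin d)) :=
  ⋃ S' ∈ {S' : Finset (EuclideanSpace ℝ (Fin d)) | S' ∈ st.K ∧ splx S ⊆ splx S'}, splx S'

end StarSetup

/-! ### Auxiliary development for `stmt_19`. -/

section Aux

variable {d : ℕ}

local notation "Eu" => EuclideanSpace ℝ (Fin d)

lemma aux_zero_mem_splx (S : Finset Eu) : (0 : Eu) ∈ splx S :=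
  subset_convexHull ℝ _ (Set.mem_insert _ _)

lemma aux_vertex_mem_splx {S : Finset Eu} {z : Eu} (hz : z ∈ S) : z ∈ splx S :=
  subset_convexHull ℝ _ (Set.mem_insert_of_mem _ hz)

lemma aux_splx_isCompact (S : Finset Eu) : IsCompact (splx S) :=
  ((S.finite_toSet.insert _)).isCompact_convexHull ℝ

lemma aux_splx_isClosed (S : Finset Eu) : IsClosed (splx S) :=
  (aux_splx_isCompact S).isClosed

lemma aux_splx_convex (S : Finset Eu) : Convex ℝ (splx S) := convex_convexHull _ _

lemma aux_splx_subset_span (T : Finset Eu) :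
    splx T ⊆ (Submodule.span ℝ (T : Set Eu) : Set Eu) := by
  apply convexHull_min _ ((Submodule.span ℝ (T : Set Eu)).convex)
  rintro z (rfl | hz)
  · exact (Submodule.span ℝ (T : Set Eu)).zero_mem
  · exact Submodule.subset_span hz

lemma aux_inner_zero {s : Set Eu} (hs : Submodule.span ℝ s = ⊤) {v : Eu}
    (hv : ∀ z ∈ s, ⟪v, z⟫ = 0) : v = 0 := by
  have key : ∀ u ∈ Submodule.span ℝ s, ⟪v, u⟫ = 0 := by
    intro u hu
    induction hu using Submodule.span_induction with
    | mem z hz => exact hv z hz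
    | zero => exact inner_zero_right v
    | add a b _ _ ha hb => rw [inner_add_right, ha, hb]; ring
    | smul r a _ ha => rw [real_inner_smul_right, ha]; ring
  exact inner_self_eq_zero.mp (key v (by rw [hs]; trivial))

lemma aux_linIndep (st : StarSetup d) {S : Finset Eu} (hS : S ∈ st.K) :
    LinearIndependent ℝ (fun z : (S : Set Eu) => (z : Eu)) := by
  have h0 := st.zero_not_mem S hS
  have hai := st.affine_indep S hS
  have h0m : (0:Eu) ∈ insert (0:Eu) (S : Set Eu) := Set.mem_insert _ _
  rw [affineIndependent_iff_linearIndependent_vsub ℝ _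
      (⟨(0:Eu), h0m⟩ : ↥(insert (0:Eu) (S : Set Eu)))] at hai
  let e : ↥(S : Set Eu) → {x : ↥(insert (0:Eu) (S : Set Eu)) // x ≠ ⟨(0:Eu), h0m⟩} :=
    fun z => ⟨⟨(z : Eu), Set.mem_insert_of_mem _ z.2⟩, by
      intro hc
      apply h0
      have hz0 : (z : Eu) = 0 := congrArg (fun x => (x.1 : Eu)) hc
      rw [← hz0]; exact z.2⟩
  have he : Function.Injective e := by
    intro a b hab
    exact Subtype.ext (congrArg (fun x => (x.1 : Eu)) hab)
  have h2 := hai.comp e he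
  convert h2 using 1
  funext z
  show (z : Eu) = _
  simp [e]
  rfl

lemma aux_span_top (st : StarSetup d) {S : Finset Eu} (hS : S ∈ st.K) :
    Submodule.span ℝ (S : Set Eu) = ⊤ := by
  apply Submodule.eq_top_of_finrank_eq
  rw [finrank_span_set_eq_card (aux_linIndep st hS), Finset.toFinset_coe, st.card_eq S hS,
    finrank_euclideanSpace_fin]

lemma aux_interior_nonempty (st : StarSetup d) {S : Finset Eu} (hS : S ∈ st.K) :
    (interior (splx S)).Nonempty := by
  rw [splx, interior_convexHull_nonempty_iff_affineSpan_eq_top]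
  have h0 : (0:Eu) ∈ affineSpan ℝ (insert (0:Eu) (S : Set Eu)) :=
    mem_affineSpan ℝ (Set.mem_insert _ _)
  rw [← AffineSubspace.direction_eq_top_iff_of_nonempty ⟨_, h0⟩]
  rw [eq_top_iff, ← aux_span_top st hS]
  rw [Submodule.span_le]
  intro z hz
  have hzm : z ∈ affineSpan ℝ (insert (0:Eu) (S : Set Eu)) :=
    mem_affineSpan ℝ (Set.mem_insert_of_mem _ hz)
  have := AffineSubspace.vsub_mem_direction hzm h0
  simpa using this

lemma aux_minorant (st : StarSetup d) {S : Finset Eu} (hS : S ∈ st.K)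
    {p : Eu} {c : ℝ} (hrep : ∀ x ∈ splx S, st.γ x = ⟪p, x⟫ + c) :
    ∀ y, ⟪p, y⟫ + c ≤ st.γ y := by
  intro y
  obtain ⟨x₀, hx₀⟩ := aux_interior_nonempty st hS
  have hx₀s : x₀ ∈ splx S := interior_subset hx₀
  have hcont : Continuous (fun ε : ℝ => x₀ + ε • (y - x₀)) := by fun_prop
  have htend : Tendsto (fun ε : ℝ => x₀ + ε • (y - x₀)) (nhds 0) (nhds x₀) := by
    have := hcont.tendsto 0
    simpa using this
  have hev : ∀ᶠ ε : ℝ in nhds 0, x₀ + ε • (y - x₀) ∈ interior (splx S) :=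
    htend.eventually (isOpen_interior.mem_nhds hx₀)
  obtain ⟨δ, hδ, hδ'⟩ := Metric.eventually_nhds_iff.mp hev
  set ε : ℝ := min (δ/2) (1/2) with hεdef
  have hε0 : 0 < ε := lt_min (by linarith) (by norm_num)
  have hε1 : ε < 1 := lt_of_le_of_lt (min_le_right _ _) (by norm_num)
  have hmem : x₀ + ε • (y - x₀) ∈ splx S := by
    refine interior_subset (hδ' ?_)
    simp only [Real.dist_eq, sub_zero]
    rw [abs_of_pos hε0]
    exact lt_of_le_of_lt (min_le_left _ _) (by linarith)
  have hcomb : x₀ + ε • (y - x₀) = (1 - ε) • x₀ + ε • y := by module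
  have hconv := st.convex_γ.2 (Set.mem_univ x₀) (Set.mem_univ y) (by linarith : (0:ℝ) ≤ 1 - ε)
    hε0.le (by ring)
  rw [← hcomb] at hconv
  have h1 : st.γ (x₀ + ε • (y - x₀)) = ⟪p, x₀⟫ + ε * ⟪p, y - x₀⟫ + c := by
    rw [hrep _ hmem, inner_add_right, real_inner_smul_right]
  have h2 : st.γ x₀ = ⟪p, x₀⟫ + c := hrep _ hx₀s
  rw [h1, h2] at hconv
  have h3 : ⟪p, y - x₀⟫ = ⟪p, y⟫ - ⟪p, x₀⟫ := inner_sub_right p y x₀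
  rw [h3] at hconv
  simp only [smul_eq_mul] at hconv
  have h4 : ε * (⟪p, y⟫ + c) ≤ ε * st.γ y := by nlinarith
  exact le_of_mul_le_mul_left h4 hε0

lemma aux_c_zero (st : StarSetup d) {S : Finset Eu} {p : Eu} {c : ℝ}
    (hrep : ∀ x ∈ splx S, st.γ x = ⟪p, x⟫ + c) : c = 0 := by
  have := hrep 0 (aux_zero_mem_splx S)
  rw [st.γ_zero, inner_zero_right] at this
  linarith

lemma aux_rep_unique (st : StarSetup d) {S : Finset Eu} (hS : S ∈ st.K) {p p' : Eu} {c c' : ℝ}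
    (hrep : ∀ x ∈ splx S, st.γ x = ⟪p, x⟫ + c)
    (hrep' : ∀ x ∈ splx S, st.γ x = ⟪p', x⟫ + c') : p = p' := by
  have hc : c = c' := by
    rw [aux_c_zero st hrep, aux_c_zero st hrep']
  have hz : ∀ z ∈ (S : Set Eu), ⟪p - p', z⟫ = 0 := by
    intro z hz
    have hzs : z ∈ splx S := aux_vertex_mem_splx hz
    have h1 := hrep z hzs
    have h2 := hrep' z hzs
    rw [inner_sub_left]
    rw [hc] at h1
    linarith
  have := aux_inner_zero (aux_span_top st hS) hz
  rwa [sub_eq_zero] at this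

lemma aux_jump_decomp (st : StarSetup d) {F Sp : Finset Eu} (hSp : Sp ∈ st.K) (hFS : F ⊆ Sp)
    (hcard : F.card = d - 1) (hd : 2 ≤ d) {n v : Eu} (hn : ‖n‖ = 1)
    (horth : ∀ z ∈ F, ⟪n, z⟫ = 0) (hv : ∀ z ∈ F, ⟪v, z⟫ = 0) :
    v = ⟪v, n⟫ • n := by
  classical
  have hli := aux_linIndep st hSp
  have hliF : LinearIndependent ℝ (fun z : (F : Set Eu) => (z : Eu)) :=
    LinearIndepOn.mono (linearIndependent_subtype_iff.mp hli) (Finset.coe_subset.mpr hFS)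
  have hnn : ⟪n, n⟫ = (1:ℝ) := by
    rw [real_inner_self_eq_norm_sq, hn]; norm_num
  have hnF : n ∉ Submodule.span ℝ (F : Set Eu) := by
    intro hmem
    have key : ∀ u ∈ Submodule.span ℝ (F : Set Eu), ⟪n, u⟫ = 0 := by
      intro u hu
      induction hu using Submodule.span_induction with
      | mem z hz => exact horth z hz
      | zero => exact inner_zero_right n
      | add a b _ _ ha hb => rw [inner_add_right, ha, hb]; ring
      | smul r a _ ha => rw [real_inner_smul_right, ha]; ring
    rw [key n hmem] at hnn
    norm_num at hnn
  have hnFmem : n ∉ (F : Set Eu) := fun h => hnF (Submodule.subset_span h)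
  have hliI : LinearIndependent ℝ (fun z : (insert n (F : Set Eu) : Set Eu) => (z : Eu)) :=
    LinearIndepOn.id_insert (linearIndependent_subtype_iff.mp hliF) hnF
  have hset : (insert n (F : Set Eu)) = ((insert n F : Finset Eu) : Set Eu) :=
    (Finset.coe_insert n F).symm
  rw [hset] at hliI
  have hspan : Submodule.span ℝ ((insert n F : Finset Eu) : Set Eu) = ⊤ := by
    apply Submodule.eq_top_of_finrank_eq
    rw [finrank_span_set_eq_card hliI]
    rw [Finset.toFinset_coe]
    rw [Finset.card_insert_of_notMem (by simpa using hnFmem), hcard,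
      finrank_euclideanSpace_fin]
    omega
  have hkey : ∀ z ∈ ((insert n F : Finset Eu) : Set Eu), ⟪v - ⟪v, n⟫ • n, z⟫ = 0 := by
    intro z hz
    rw [Finset.coe_insert] at hz
    rcases hz with rfl | hz
    · rw [inner_sub_left, real_inner_smul_left, hnn]; ring
    · rw [inner_sub_left, real_inner_smul_left, horth z hz, hv z hz]; ring
  have := aux_inner_zero hspan hkey
  rwa [sub_eq_zero] at this

lemma aux_generic_point {ι : Type} (A : Finset ι) (f : ι → Submodule ℝ Eu)
    (hf : ∀ i ∈ A, f i ≠ ⊤) (c : Eu) {ρ : ℝ} (hρ : 0 < ρ) :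
    ∃ x ∈ ball c ρ, ∀ i ∈ A, x ∉ f i := by
  have hnull : volume (⋃ i ∈ A, (f i : Set Eu)) = 0 := by
    refine le_antisymm ?_ zero_le
    refine le_trans (measure_biUnion_finset_le A _) ?_
    have h : ∀ i ∈ A, volume ((f i : Set Eu)) = 0 := fun i hi =>
      Measure.addHaar_submodule volume (f i) (hf i hi)
    rw [Finset.sum_congr rfl h]
    simp
  by_contra h
  push_neg at h
  have hsub : ball c ρ ⊆ ⋃ i ∈ A, (f i : Set Eu) := by
    intro x hx
    obtain ⟨i, hi, hfi⟩ := h x hx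
    exact Set.mem_biUnion hi hfi
  have h2 : volume (ball c ρ) ≤ volume (⋃ i ∈ A, (f i : Set Eu)) := measure_mono hsub
  rw [hnull] at h2
  exact absurd (le_antisymm h2 zero_le) (measure_ball_pos volume c hρ).ne'

lemma aux_eps (a C δ : ℝ) (hδ : 0 < δ) (h : ∀ ε : ℝ, 0 < ε → ε < δ → a ≤ C * ε) :
    a ≤ 0 := by
  by_contra ha
  push_neg at ha
  rcases le_or_gt C 0 with hC | hC
  · have := h (δ/2) (by linarith) (by linarith)
    nlinarith
  · set ε := min (δ/2) (a/(2*C)) with hε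
    have hε0 : 0 < ε := lt_min (by linarith) (by positivity)
    have h1 := h ε hε0 (lt_of_le_of_lt (min_le_left _ _) (by linarith))
    have h2 : C * ε ≤ C * (a/(2*C)) := by
      apply mul_le_mul_of_nonneg_left (min_le_right _ _) hC.le
    have h3 : C * (a/(2*C)) = a/2 := by field_simp
    linarith

lemma aux_chain [DecidableEq (EuclideanSpace ℝ (Fin d))] (K : Finset (Finset Eu))
    (conforming : ∀ S₁ ∈ K, ∀ S₂ ∈ K, splx S₁ ∩ splx S₂ =
      convexHull ℝ (insert (0 : Eu) ((S₁ : Set Eu) ∩ (S₂ : Set Eu))))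
    (card_eq : ∀ S ∈ K, S.card = d)
    (hKne : K.Nonempty)
    (p : Finset Eu → Eu)
    (ℱ : Finset (Finset Eu)) (J : Finset Eu → ℝ)
    (hJ : ∀ F ∈ ℱ, 0 ≤ J F)
    (hjump : ∀ S₁ ∈ K, ∀ S₂ ∈ K, S₁ ≠ S₂ → (S₁ ∩ S₂).card = d - 1 →
       (S₁ ∩ S₂) ∈ ℱ ∧ ‖p S₂ - p S₁‖ ≤ J (S₁ ∩ S₂))
    (hd : 2 ≤ d)
    (x y : Eu)
    (hcov : ∀ t ∈ Icc (0:ℝ) 1, ∃ S ∈ K, t • (y - x) + x ∈ splx S)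
    (hgx : ∀ S₁ ∈ K, ∀ S₂ ∈ K, S₁ ≠ S₂ →
       x ∉ Submodule.span ℝ ((S₁ ∩ S₂ : Finset Eu) : Set Eu))
    (hgseg : ∀ S₁ ∈ K, ∀ S₂ ∈ K, S₁ ≠ S₂ → (S₁ ∩ S₂).card ≤ d - 2 →
       ∀ t ∈ Icc (0:ℝ) 1, t • (y - x) + x ∉ Submodule.span ℝ ((S₁ ∩ S₂ : Finset Eu) : Set Eu)) :
    ∃ Sx ∈ K, ∃ Sy ∈ K, x ∈ splx Sx ∧ y ∈ splx Sy ∧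
      ⟪p Sy - p Sx, y - x⟫ ≤ (∑ F ∈ ℱ, J F) * ‖y - x‖ := by
  classical
  set s : ℝ → Eu := fun t => t • (y - x) + x with hs
  set T : Finset Eu → Set ℝ := fun S => Icc (0:ℝ) 1 ∩ s ⁻¹' (splx S) with hT
  have hsline : s = ((AffineMap.lineMap x y : ℝ →ᵃ[ℝ] Eu) : ℝ → Eu) := by
    funext t
    rw [hs, AffineMap.lineMap_apply_module']
  have hTsub : ∀ S, T S ⊆ Icc (0:ℝ) 1 := fun S => inter_subset_left
  have hTbb : ∀ S, BddBelow (T S) := fun S => ⟨0, fun t ht => ht.1.1⟩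
  have hTba : ∀ S, BddAbove (T S) := fun S => ⟨1, fun t ht => ht.1.2⟩
  have hTclosed : ∀ S, IsClosed (T S) := by
    intro S
    apply isClosed_Icc.inter
    apply (aux_splx_isClosed S).preimage
    rw [hs]; fun_prop
  have hTconv : ∀ S, Convex ℝ (T S) := by
    intro S
    apply (convex_Icc (0:ℝ) 1).inter
    rw [hsline]
    exact (aux_splx_convex S).affine_preimage _
  -- the finite set of breakpoints
  set P : Finset ℝ := insert 0 (insert 1
    (K.image (fun S => sInf (T S)) ∪ K.image (fun S => sSup (T S)))) with hP
  have h0P : (0:ℝ) ∈ P := Finset.mem_insert_self _ _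
  have h1P : (1:ℝ) ∈ P := Finset.mem_insert_of_mem (Finset.mem_insert_self _ _)
  have hPmem : ∀ a ∈ P, a ∈ Icc (0:ℝ) 1 := by
    intro a ha
    rw [hP] at ha
    simp only [Finset.mem_insert, Finset.mem_union, Finset.mem_image] at ha
    rcases ha with rfl | rfl | ⟨S, hS, rfl⟩ | ⟨S, hS, rfl⟩
    · exact ⟨le_refl _, by norm_num⟩
    · exact ⟨by norm_num, le_refl _⟩
    · by_cases hne : (T S).Nonempty
      · exact hTsub S ((hTclosed S).csInf_mem hne (hTbb S))
      · rw [Set.not_nonempty_iff_eq_empty.mp hne, Real.sInf_empty]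
        exact ⟨le_refl _, by norm_num⟩
    · by_cases hne : (T S).Nonempty
      · exact hTsub S ((hTclosed S).csSup_mem hne (hTba S))
      · rw [Set.not_nonempty_iff_eq_empty.mp hne, Real.sSup_empty]
        exact ⟨le_refl _, by norm_num⟩
  set L : List ℝ := P.sort (· ≤ ·) with hL
  set N : ℕ := L.length with hN
  have hNP : N = P.card := Finset.length_sort _
  have hN2 : 2 ≤ N := by
    rw [hNP]
    refine Finset.one_lt_card.mpr ⟨0, h0P, 1, h1P, by norm_num⟩
  set t_ : ℕ → ℝ := fun j => L.getD j 0 with ht_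
  have htget : ∀ (j : ℕ) (h : j < N), t_ j = L.get ⟨j, h⟩ := by
    intro j h
    rw [ht_]
    exact List.getD_eq_get L 0 ⟨j, h⟩
  have hsorted : L.SortedLT := Finset.sortedLT_sort P
  have hmono : StrictMono L.get := hsorted.strictMono_get
  have hmemL : ∀ a : ℝ, a ∈ L ↔ a ∈ P := fun a => Finset.mem_sort _
  have htP : ∀ (j : ℕ), j < N → t_ j ∈ P := by
    intro j h
    rw [htget j h, ← hmemL]
    exact List.get_mem _ _
  have htlt : ∀ (i j : ℕ) (hi : i < N) (hj : j < N), i < j → t_ i < t_ j := by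
    intro i j hi hj hij
    rw [htget i hi, htget j hj]
    exact hmono (by exact Fin.mk_lt_mk.mpr hij)
  have hgete : ∀ (i : ℕ) (hi : i < N) (k : Fin N), (k : ℕ) = i → L.get k = t_ i := by
    intro i hi k hki
    rw [htget i hi]
    congr 1
    exact Fin.ext hki
  have hltget : ∀ (i : ℕ) (hi : i < N) (k : Fin N), (k : ℕ) < i → L.get k < t_ i := by
    intro i hi k hki
    rw [htget i hi]
    exact hmono (Fin.lt_def.mpr hki)
  have hgtget : ∀ (i : ℕ) (hi : i < N) (k : Fin N), i < (k : ℕ) → t_ i < L.get k := by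
    intro i hi k hki
    rw [htget i hi]
    exact hmono (Fin.lt_def.mpr hki)
  -- no point of P strictly between consecutive sorted elements
  have hgap_left : ∀ a ∈ P, ∀ j : ℕ, j + 1 < N → a < t_ (j+1) → a ≤ t_ j := by
    intro a ha j hj hlt
    obtain ⟨k, hk⟩ := List.mem_iff_get.mp ((hmemL a).mpr ha)
    rcases Nat.lt_or_ge k.val (j+1) with h | h
    · rw [← hk]
      rcases Nat.lt_or_ge k.val j with h2 | h2
      · exact (hltget j (by omega) k h2).le
      · exact (hgete j (by omega) k (by omega)).le
    · exfalso
      have : t_ (j+1) ≤ a := by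
        rw [← hk]
        rcases Nat.lt_or_ge (j+1) k.val with h2 | h2
        · exact (hgtget (j+1) hj k h2).le
        · exact (hgete (j+1) hj k (by omega)).ge
      linarith
  have hgap_right : ∀ a ∈ P, ∀ j : ℕ, j + 1 < N → t_ j < a → t_ (j+1) ≤ a := by
    intro a ha j hj hlt
    obtain ⟨k, hk⟩ := List.mem_iff_get.mp ((hmemL a).mpr ha)
    rcases Nat.lt_or_ge j k.val with h | h
    · rw [← hk]
      rcases Nat.lt_or_ge (j+1) k.val with h2 | h2
      · exact (hgtget (j+1) hj k h2).le
      · exact (hgete (j+1) hj k (by omega)).ge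
    · exfalso
      have : a ≤ t_ j := by
        rw [← hk]
        rcases Nat.lt_or_ge k.val j with h2 | h2
        · exact (hltget j (by omega) k h2).le
        · exact (hgete j (by omega) k (by omega)).le
      linarith
  have ht0 : t_ 0 = 0 := by
    have h1 : t_ 0 ∈ P := htP 0 (by omega)
    have h2 : (0:ℝ) ≤ t_ 0 := (hPmem _ h1).1
    obtain ⟨k, hk⟩ := List.mem_iff_get.mp ((hmemL 0).mpr h0P)
    have h3 : t_ 0 ≤ 0 := by
      rw [← hk]
      rcases Nat.eq_zero_or_pos k.val with h4 | h4
      · exact (hgete 0 (by omega) k (by omega)).ge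
      · exact (hgtget 0 (by omega) k h4).le
    linarith
  have htlast : t_ (N-1) = 1 := by
    have h1 : t_ (N-1) ∈ P := htP _ (by omega)
    have h2 : t_ (N-1) ≤ 1 := (hPmem _ h1).2
    obtain ⟨k, hk⟩ := List.mem_iff_get.mp ((hmemL 1).mpr h1P)
    have h3 : (1:ℝ) ≤ t_ (N-1) := by
      rw [← hk]
      rcases Nat.lt_or_ge k.val (N-1) with h4 | h4
      · exact (hltget (N-1) (by omega) k h4).le
      · exact (hgete (N-1) (by omega) k (by omega)).le
    linarith
  -- each consecutive interval is inside one simplex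
  have hstep : ∀ j : ℕ, j + 1 < N → ∃ S ∈ K, Icc (t_ j) (t_ (j+1)) ⊆ T S := by
    intro j hj
    have hjlt : t_ j < t_ (j+1) := htlt j (j+1) (by omega) hj (by omega)
    set m : ℝ := (t_ j + t_ (j+1))/2 with hm
    have hm1 : t_ j < m := by rw [hm]; linarith
    have hm2 : m < t_ (j+1) := by rw [hm]; linarith
    have hm01 : m ∈ Icc (0:ℝ) 1 := by
      constructor
      · have := (hPmem _ (htP j (by omega))).1; linarith
      · have := (hPmem _ (htP (j+1) hj)).2; linarith
    obtain ⟨S, hSK, hSm⟩ := hcov m hm01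
    have hmT : m ∈ T S := ⟨hm01, hSm⟩
    have hTne : (T S).Nonempty := ⟨m, hmT⟩
    have hinf : sInf (T S) ∈ T S := (hTclosed S).csInf_mem hTne (hTbb S)
    have hsup : sSup (T S) ∈ T S := (hTclosed S).csSup_mem hTne (hTba S)
    have huP : sInf (T S) ∈ P := by
      rw [hP]
      apply Finset.mem_insert_of_mem
      apply Finset.mem_insert_of_mem
      apply Finset.mem_union_left
      exact Finset.mem_image_of_mem _ hSK
    have hvP : sSup (T S) ∈ P := by
      rw [hP]
      apply Finset.mem_insert_of_mem
      apply Finset.mem_insert_of_mem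
      apply Finset.mem_union_right
      exact Finset.mem_image_of_mem _ hSK
    have hum : sInf (T S) ≤ m := csInf_le (hTbb S) hmT
    have hmv : m ≤ sSup (T S) := le_csSup (hTba S) hmT
    have h1 : sInf (T S) ≤ t_ j := hgap_left _ huP j hj (by linarith)
    have h2 : t_ (j+1) ≤ sSup (T S) := hgap_right _ hvP j hj (by linarith)
    refine ⟨S, hSK, fun t ht => ?_⟩
    have := (hTconv S).ordConnected.out hinf hsup
    exact this ⟨by linarith [ht.1], by linarith [ht.2]⟩
  -- choose the simplices
  have hstep' : ∀ j : ℕ, ∃ S, j + 1 < N → S ∈ K ∧ Icc (t_ j) (t_ (j+1)) ⊆ T S := by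
    intro j
    by_cases hj : j + 1 < N
    · obtain ⟨S, hSK, hsub⟩ := hstep j hj
      exact ⟨S, fun _ => ⟨hSK, hsub⟩⟩
    · exact ⟨hKne.choose, fun h => absurd h hj⟩
  choose S_ hS_ using hstep'
  set M : ℕ := N - 1 with hM
  have hM1 : 1 ≤ M := by omega
  set σ : ℕ → ℝ := fun j => ⟪p (S_ j), y - x⟫ with hσ
  -- membership of x and y
  have hxmem : x ∈ splx (S_ 0) := by
    have h := (hS_ 0 (by omega)).2
    have h2 : (0:ℝ) ∈ Icc (t_ 0) (t_ 1) := by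
      have hlt01 := htlt 0 1 (by omega) (by omega) (by omega)
      rw [ht0] at hlt01 ⊢
      exact ⟨le_refl _, hlt01.le⟩
    have := h h2
    have hx0 : s 0 = x := by rw [hs]; simp
    rw [← hx0]
    exact this.2
  have hymem : y ∈ splx (S_ (M-1)) := by
    have hMN : M - 1 + 1 < N := by omega
    have h := (hS_ (M-1) hMN).2
    have heq : M - 1 + 1 = N - 1 := by omega
    have h2 : (1:ℝ) ∈ Icc (t_ (M-1)) (t_ (M-1+1)) := by
      rw [heq, htlast]
      refine ⟨?_, le_refl _⟩
      have := htlt (M-1) (N-1) (by omega) (by omega) (by omega)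
      rw [htlast] at this
      exact this.le
    have := h h2
    have hy1 : s 1 = y := by rw [hs]; simp
    rw [← hy1]
    exact this.2
  refine ⟨S_ 0, (hS_ 0 (by omega)).1, S_ (M-1), (hS_ (M-1) (by omega)).1, hxmem, hymem, ?_⟩
  -- telescoping
  have htel : ⟪p (S_ (M-1)) - p (S_ 0), y - x⟫ = ∑ j ∈ Finset.range (M-1), (σ (j+1) - σ j) := by
    rw [Finset.sum_range_sub σ (M-1), hσ, inner_sub_left]
  -- per-breakpoint analysis
  have hbreak : ∀ j ∈ Finset.range (M-1), S_ j ≠ S_ (j+1) →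
      (S_ j ∩ S_ (j+1)).card = d - 1 ∧
      s (t_ (j+1)) ∈ Submodule.span ℝ ((S_ j ∩ S_ (j+1) : Finset Eu) : Set Eu) := by
    intro j hj hne
    rw [Finset.mem_range] at hj
    have hj1 : j + 1 < N := by omega
    have hj2 : j + 2 < N := by omega
    have hK1 : S_ j ∈ K := (hS_ j hj1).1
    have hK2 : S_ (j+1) ∈ K := (hS_ (j+1) hj2).1
    have hmem1 : s (t_ (j+1)) ∈ splx (S_ j) := by
      have := (hS_ j hj1).2 ⟨(htlt j (j+1) (by omega) (by omega) (by omega)).le, le_refl _⟩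
      exact this.2
    have hmem2 : s (t_ (j+1)) ∈ splx (S_ (j+1)) := by
      have := (hS_ (j+1) hj2).2
        ⟨le_refl _, (htlt (j+1) (j+2) (by omega) (by omega) (by omega)).le⟩
      exact this.2
    have hconf := conforming _ hK1 _ hK2
    have hcm : s (t_ (j+1)) ∈ convexHull ℝ (insert (0:Eu) ((S_ j : Set Eu) ∩ (S_ (j+1) : Set Eu))) := by
      rw [← hconf]; exact ⟨hmem1, hmem2⟩
    have hcm' : s (t_ (j+1)) ∈ Submodule.span ℝ ((S_ j ∩ S_ (j+1) : Finset Eu) : Set Eu) := by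
      apply aux_splx_subset_span
      rw [splx, Finset.coe_inter]
      exact hcm
    have hcle : (S_ j ∩ S_ (j+1)).card ≤ d := by
      refine le_trans (Finset.card_le_card (Finset.inter_subset_left)) ?_
      exact (card_eq _ hK1).le
    have hne_d : (S_ j ∩ S_ (j+1)).card ≠ d := by
      intro h
      apply hne
      have e1 : S_ j ∩ S_ (j+1) = S_ j := by
        apply Finset.eq_of_subset_of_card_le Finset.inter_subset_left
        rw [h, card_eq _ hK1]
      have e2 : S_ j ∩ S_ (j+1) = S_ (j+1) := by
        apply Finset.eq_of_subset_of_card_le Finset.inter_subset_right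
        rw [h, card_eq _ hK2]
      rw [← e1, e2]
    have hne_small : ¬((S_ j ∩ S_ (j+1)).card ≤ d - 2) := by
      intro hsmall
      exact hgseg _ hK1 _ hK2 hne hsmall (t_ (j+1)) (hPmem _ (htP (j+1) hj1)) hcm'
    exact ⟨by omega, hcm'⟩
  set B : Finset ℕ := (Finset.range (M-1)).filter (fun j => S_ j ≠ S_ (j+1)) with hB
  have hsum1 : ∑ j ∈ Finset.range (M-1), (σ (j+1) - σ j) = ∑ j ∈ B, (σ (j+1) - σ j) := by
    rw [hB]
    symm
    apply Finset.sum_filter_of_ne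
    intro j hj hne heq
    apply hne
    simp only [hσ, heq, sub_self]
  have hterm : ∀ j ∈ B, σ (j+1) - σ j ≤ J (S_ j ∩ S_ (j+1)) * ‖y - x‖ := by
    intro j hj
    rw [hB, Finset.mem_filter] at hj
    obtain ⟨hjr, hne⟩ := hj
    obtain ⟨hcard, _⟩ := hbreak j hjr hne
    rw [Finset.mem_range] at hjr
    have hK1 : S_ j ∈ K := (hS_ j (by omega)).1
    have hK2 : S_ (j+1) ∈ K := (hS_ (j+1) (by omega)).1
    obtain ⟨hF, hnorm⟩ := hjump _ hK1 _ hK2 hne hcard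
    have h1 : σ (j+1) - σ j = ⟪p (S_ (j+1)) - p (S_ j), y - x⟫ := by
      rw [hσ, inner_sub_left]
    rw [h1]
    calc ⟪p (S_ (j+1)) - p (S_ j), y - x⟫ ≤ ‖p (S_ (j+1)) - p (S_ j)‖ * ‖y - x‖ :=
          real_inner_le_norm _ _
    _ ≤ J (S_ j ∩ S_ (j+1)) * ‖y - x‖ :=
          mul_le_mul_of_nonneg_right hnorm (norm_nonneg _)
  have hinj : ∀ a ∈ B, ∀ b ∈ B, S_ a ∩ S_ (a+1) = S_ b ∩ S_ (b+1) → a = b := by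
    have key : ∀ a ∈ B, ∀ b ∈ B, a < b → S_ a ∩ S_ (a+1) = S_ b ∩ S_ (b+1) → False := by
      intro a ha b hb hab heq
      rw [hB, Finset.mem_filter, Finset.mem_range] at ha hb
      set W := Submodule.span ℝ ((S_ a ∩ S_ (a+1) : Finset Eu) : Set Eu) with hW
      have h1 : s (t_ (a+1)) ∈ W := (hbreak a (Finset.mem_range.mpr ha.1) ha.2).2
      have h2 : s (t_ (b+1)) ∈ W := by
        have := (hbreak b (Finset.mem_range.mpr hb.1) hb.2).2
        rw [hW, heq]
        exact this
      have htne : t_ (a+1) < t_ (b+1) := htlt (a+1) (b+1) (by omega) (by omega) (by omega)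
      have hdiff : (t_ (b+1) - t_ (a+1)) • (y - x) ∈ W := by
        have := W.sub_mem h2 h1
        rw [hs] at this
        simpa [sub_smul] using this
      have hyx : y - x ∈ W := by
        have := W.smul_mem (t_ (b+1) - t_ (a+1))⁻¹ hdiff
        rwa [smul_smul, inv_mul_cancel₀ (by linarith), one_smul] at this
      have hxW : x ∈ W := by
        have := W.sub_mem h1 (W.smul_mem (t_ (a+1)) hyx)
        rw [hs] at this
        simpa using this
      exact hgx _ ((hS_ a (by omega)).1) _ ((hS_ (a+1) (by omega)).1) ha.2 hxW
    intro a ha b hb heq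
    rcases lt_trichotomy a b with h | h | h
    · exact absurd heq (fun e => key a ha b hb h e)
    · exact h
    · exact absurd heq.symm (fun e => key b hb a ha h e)
  calc ⟪p (S_ (M-1)) - p (S_ 0), y - x⟫ = ∑ j ∈ B, (σ (j+1) - σ j) := by rw [htel, hsum1]
  _ ≤ ∑ j ∈ B, J (S_ j ∩ S_ (j+1)) * ‖y - x‖ := Finset.sum_le_sum hterm
  _ = (∑ j ∈ B, J (S_ j ∩ S_ (j+1))) * ‖y - x‖ := by rw [Finset.sum_mul]
  _ = (∑ F ∈ B.image (fun j => S_ j ∩ S_ (j+1)), J F) * ‖y - x‖ := by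
      rw [Finset.sum_image hinj]
  _ ≤ (∑ F ∈ ℱ, J F) * ‖y - x‖ := by
      apply mul_le_mul_of_nonneg_right _ (norm_nonneg _)
      apply Finset.sum_le_sum_of_subset_of_nonneg
      · intro F hF
        rw [Finset.mem_image] at hF
        obtain ⟨j, hj, rfl⟩ := hF
        rw [hB, Finset.mem_filter] at hj
        obtain ⟨hjr, hne⟩ := hj
        rw [Finset.mem_range] at hjr
        have hK1 : S_ j ∈ K := (hS_ j (by omega)).1
        have hK2 : S_ (j+1) ∈ K := (hS_ (j+1) (by omega)).1
        exact (hjump _ hK1 _ hK2 hne (hbreak j (Finset.mem_range.mpr hjr) hne).1).1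
      · intro F hF _
        exact hJ F hF

lemma aux_diam [DecidableEq (EuclideanSpace ℝ (Fin d))] (st : StarSetup d) (hd : 2 ≤ d) (p : Finset Eu → Eu)
    (hp : ∀ S ∈ st.K, ∀ z ∈ splx S, st.γ z = ⟪p S, z⟫)
    (ℱ : Finset (Finset Eu)) (J : Finset Eu → ℝ)
    (hJ : ∀ F ∈ ℱ, 0 ≤ J F)
    (hjump : ∀ S₁ ∈ st.K, ∀ S₂ ∈ st.K, S₁ ≠ S₂ → (S₁ ∩ S₂).card = d - 1 →
       (S₁ ∩ S₂) ∈ ℱ ∧ ‖p S₂ - p S₁‖ ≤ J (S₁ ∩ S₂))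
    {w w' : Eu} (hw : w ∈ st.subdiff) (hw' : w' ∈ st.subdiff) :
    ‖w' - w‖ ≤ ∑ F ∈ ℱ, J F := by
  classical
  set Sg : ℝ := ∑ F ∈ ℱ, J F with hSg
  have hSg0 : 0 ≤ Sg := Finset.sum_nonneg hJ
  by_cases hww : w' = w
  · rw [hww]; simpa using hSg0
  obtain ⟨r, hr, hball⟩ := Metric.mem_nhds_iff.mp st.nhd
  set u : Eu := w' - w with hu
  have hune : u ≠ 0 := sub_ne_zero.mpr hww
  have hnu : (0:ℝ) < ‖u‖ := norm_pos_iff.mpr hune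
  set ζ : Eu := (r/2) • ‖u‖⁻¹ • u with hζ
  have hζnorm : ‖ζ‖ = r/2 := by
    rw [hζ, norm_smul, norm_smul, norm_inv, norm_norm, inv_mul_cancel₀ hnu.ne', mul_one,
      Real.norm_eq_abs, abs_of_pos (by linarith : (0:ℝ) < r/2)]
  -- max norm of gradients
  set Mp : ℝ := (st.K.image fun S => ‖p S‖).max' (st.K_nonempty.image _) with hMp
  have hMple : ∀ S ∈ st.K, ‖p S‖ ≤ Mp := fun S hS =>
    Finset.le_max' _ ‖p S‖ (Finset.mem_image_of_mem (fun S => ‖p S‖) hS)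
  have hMp0 : 0 ≤ Mp := by
    obtain ⟨S₀, hS₀⟩ := st.K_nonempty
    exact le_trans (norm_nonneg _) (hMple S₀ hS₀)
  -- properness of the degenerate spans
  have hproper : ∀ S₁ ∈ st.K, ∀ S₂ ∈ st.K, S₁ ≠ S₂ →
      Submodule.span ℝ ((S₁ ∩ S₂ : Finset Eu) : Set Eu) ≠ ⊤ := by
    intro S₁ h1 S₂ h2 hne htop
    have hcd : (S₁ ∩ S₂).card < d := by
      have hsub : S₁ ∩ S₂ ⊆ S₁ := Finset.inter_subset_left
      have hle : (S₁ ∩ S₂).card ≤ d := le_trans (Finset.card_le_card hsub) (st.card_eq _ h1).le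
      rcases lt_or_eq_of_le hle with h | h
      · exact h
      · exfalso
        apply hne
        have e1 : S₁ ∩ S₂ = S₁ := Finset.eq_of_subset_of_card_le hsub (by rw [h, st.card_eq _ h1])
        have e2 : S₁ ∩ S₂ = S₂ := Finset.eq_of_subset_of_card_le Finset.inter_subset_right
          (by rw [h, st.card_eq _ h2])
        rw [← e1, e2]
    have h3 : Module.finrank ℝ (Submodule.span ℝ ((S₁ ∩ S₂ : Finset Eu) : Set Eu)) ≤ (S₁ ∩ S₂).card :=
      finrank_span_finset_le_card _
    rw [htop, finrank_top, finrank_euclideanSpace_fin] at h3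
    omega
  -- the key epsilon estimate
  have hkey : ∀ ε : ℝ, 0 < ε → ε < r/4 →
      ⟪u, ζ⟫ - Sg * (r/2) ≤ (Sg + 2*Mp + ‖w‖ + ‖w'‖) * ε := by
    intro ε hε hεr
    set ρ : ℝ := min ε (r/4) with hρdef
    have hρ0 : 0 < ρ := lt_min hε (by linarith)
    have hρε : ρ ≤ ε := min_le_left _ _
    have hρr : ρ ≤ r/4 := min_le_right _ _
    -- generic x
    set A : Finset (Finset Eu × Finset Eu) :=
      (st.K ×ˢ st.K).filter (fun q => q.1 ≠ q.2) with hA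
    obtain ⟨x, hxball, hxgen⟩ := aux_generic_point A
      (fun q => Submodule.span ℝ ((q.1 ∩ q.2 : Finset Eu) : Set Eu))
      (by
        intro q hq
        rw [hA, Finset.mem_filter, Finset.mem_product] at hq
        exact hproper q.1 hq.1.1 q.2 hq.1.2 hq.2) (-ζ) hρ0
    -- generic y
    set A' : Finset (Finset Eu × Finset Eu) :=
      (st.K ×ˢ st.K).filter (fun q => q.1 ≠ q.2 ∧ (q.1 ∩ q.2).card ≤ d - 2) with hA'
    obtain ⟨y, hyball, hygen⟩ := aux_generic_point A'
      (fun q => Submodule.span ℝ ((q.1 ∩ q.2 : Finset Eu) : Set Eu) ⊔ (ℝ ∙ x))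
      (by
        intro q hq
        rw [hA', Finset.mem_filter, Finset.mem_product] at hq
        intro htop
        have htop' : (Submodule.span ℝ ((q.1 ∩ q.2 : Finset Eu) : Set Eu) ⊔ (ℝ ∙ x) :
            Submodule ℝ Eu) = ⊤ := htop
        have h1 : Module.finrank ℝ
            (Submodule.span ℝ ((q.1 ∩ q.2 : Finset Eu) : Set Eu) ⊔ (ℝ ∙ x) : Submodule ℝ Eu) ≤
            (q.1 ∩ q.2).card + 1 := by
          have hsum := Submodule.finrank_sup_add_finrank_inf_eq
            (Submodule.span ℝ ((q.1 ∩ q.2 : Finset Eu) : Set Eu)) (ℝ ∙ x)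
          have h2 : Module.finrank ℝ (Submodule.span ℝ ((q.1 ∩ q.2 : Finset Eu) : Set Eu)) ≤
              (q.1 ∩ q.2).card := finrank_span_finset_le_card _
          have h3 : Module.finrank ℝ (ℝ ∙ x : Submodule ℝ Eu) ≤ 1 := by
            rcases eq_or_ne x 0 with hx0 | hx0
            · rw [hx0, Submodule.span_zero_singleton]
              rw [finrank_bot]
              omega
            · rw [finrank_span_singleton hx0]
          omega
        rw [htop', finrank_top, finrank_euclideanSpace_fin] at h1
        have := hq.2.2
        omega) ζ hρ0
    -- x, y are in the ball of radius r
    have hxr : x ∈ ball (0:Eu) r := by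
      rw [mem_ball, dist_zero_right]
      have h1 : ‖x - (-ζ)‖ < ρ := by rwa [← dist_eq_norm]
      calc ‖x‖ = ‖(x - (-ζ)) + (-ζ)‖ := by congr 1; abel
      _ ≤ ‖x - (-ζ)‖ + ‖-ζ‖ := norm_add_le _ _
      _ < ρ + r/2 := by rw [norm_neg, hζnorm]; linarith
      _ ≤ r := by linarith
    have hyr : y ∈ ball (0:Eu) r := by
      rw [mem_ball, dist_zero_right]
      have h1 : ‖y - ζ‖ < ρ := by rwa [← dist_eq_norm]
      calc ‖y‖ = ‖(y - ζ) + ζ‖ := by congr 1; abel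
      _ ≤ ‖y - ζ‖ + ‖ζ‖ := norm_add_le _ _
      _ < ρ + r/2 := by rw [hζnorm]; linarith
      _ ≤ r := by linarith
    -- coverage of the segment
    have hcov : ∀ t ∈ Icc (0:ℝ) 1, ∃ S ∈ st.K, t • (y - x) + x ∈ splx S := by
      intro t ht
      have hmem : t • (y - x) + x ∈ ball (0:Eu) r := by
        have hcomb : t • (y - x) + x = (1 - t) • x + t • y := by module
        rw [hcomb]
        exact (convex_ball (0:Eu) r) hxr hyr (by linarith [ht.2]) ht.1 (by ring)
      have hmem2 := hball hmem
      simpa using hmem2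
    have hgx : ∀ S₁ ∈ st.K, ∀ S₂ ∈ st.K, S₁ ≠ S₂ →
        x ∉ Submodule.span ℝ ((S₁ ∩ S₂ : Finset Eu) : Set Eu) := by
      intro S₁ h1 S₂ h2 hne
      exact hxgen (S₁, S₂) (by rw [hA, Finset.mem_filter, Finset.mem_product]; exact ⟨⟨h1, h2⟩, hne⟩)
    have hgseg : ∀ S₁ ∈ st.K, ∀ S₂ ∈ st.K, S₁ ≠ S₂ → (S₁ ∩ S₂).card ≤ d - 2 →
        ∀ t ∈ Icc (0:ℝ) 1, t • (y - x) + x ∉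
          Submodule.span ℝ ((S₁ ∩ S₂ : Finset Eu) : Set Eu) := by
      intro S₁ h1 S₂ h2 hne hcd t ht hmem
      set W := Submodule.span ℝ ((S₁ ∩ S₂ : Finset Eu) : Set Eu) with hW
      by_cases ht0 : t = 0
      · rw [ht0] at hmem
        simp only [zero_smul, zero_add] at hmem
        exact hgx S₁ h1 S₂ h2 hne hmem
      · apply hygen (S₁, S₂)
          (by rw [hA', Finset.mem_filter, Finset.mem_product]; exact ⟨⟨h1, h2⟩, hne, hcd⟩)
        have hxmem : x ∈ (W ⊔ (ℝ ∙ x) : Submodule ℝ Eu) :=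
          Submodule.mem_sup_right (Submodule.mem_span_singleton_self x)
        have hsmem : t • (y - x) + x ∈ (W ⊔ (ℝ ∙ x) : Submodule ℝ Eu) :=
          Submodule.mem_sup_left hmem
        have hy : y = t⁻¹ • (t • (y - x) + x) + (1 - t⁻¹) • x := by
          have h1 : t⁻¹ • (t • (y - x)) = y - x := by
            rw [smul_smul, inv_mul_cancel₀ ht0, one_smul]
          rw [smul_add, h1]
          module
        rw [hy]
        exact Submodule.add_mem _ (Submodule.smul_mem _ _ hsmem) (Submodule.smul_mem _ _ hxmem)
    obtain ⟨Sx, hSxK, Sy, hSyK, hxmem, hymem, hchain⟩ :=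
      aux_chain st.K st.conforming st.card_eq st.K_nonempty p ℱ J hJ hjump hd x y hcov hgx hgseg
    -- values of γ
    have hγx : st.γ x = ⟪p Sx, x⟫ := hp Sx hSxK x hxmem
    have hγy : st.γ y = ⟪p Sy, y⟫ := hp Sy hSyK y hymem
    have hxω : x ∈ st.ω := Set.mem_biUnion hSxK hxmem
    have hyω : y ∈ st.ω := Set.mem_biUnion hSyK hymem
    have hwx : ⟪w, x⟫ ≤ ⟪p Sx, x⟫ := by rw [← hγx]; exact hw x hxω
    have hw'y : ⟪w', y⟫ ≤ ⟪p Sy, y⟫ := by rw [← hγy]; exact hw' y hyω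
    -- approximation estimates
    have hd1 : ‖ζ - y‖ < ρ := by
      have h1 := mem_ball.mp hyball
      rw [dist_eq_norm] at h1
      calc ‖ζ - y‖ = ‖y - ζ‖ := norm_sub_rev _ _
      _ < ρ := h1
    have hd2 : ‖-ζ - x‖ < ρ := by
      have h1 := mem_ball.mp hxball
      rw [dist_eq_norm] at h1
      calc ‖-ζ - x‖ = ‖x - (-ζ)‖ := norm_sub_rev _ _
      _ < ρ := h1
    have hyx : ‖y - x‖ ≤ r + 2*ρ := by
      calc ‖y - x‖ = ‖(y - ζ) + (ζ - (-ζ)) + ((-ζ) - x)‖ := by congr 1; abel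
      _ ≤ ‖(y - ζ) + (ζ - (-ζ))‖ + ‖(-ζ) - x‖ := norm_add_le _ _
      _ ≤ ‖y - ζ‖ + ‖ζ - (-ζ)‖ + ‖(-ζ) - x‖ := by
          have := norm_add_le (y - ζ) (ζ - (-ζ)); linarith
      _ ≤ r + 2*ρ := by
          have e1 : ‖y - ζ‖ = ‖ζ - y‖ := norm_sub_rev _ _
          have e2 : ‖ζ - (-ζ)‖ = 2 * ‖ζ‖ := by
            have : ζ - (-ζ) = (2:ℝ) • ζ := by module
            rw [this, norm_smul]
            simp
          rw [e2, hζnorm]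
          linarith
    have hyx2 : ‖y + x‖ ≤ 2*ρ := by
      calc ‖y + x‖ = ‖(y - ζ) + (x - (-ζ))‖ := by congr 1; abel
      _ ≤ ‖y - ζ‖ + ‖x - (-ζ)‖ := norm_add_le _ _
      _ ≤ 2*ρ := by
          have e1 : ‖y - ζ‖ = ‖ζ - y‖ := norm_sub_rev _ _
          have e2 : ‖x - (-ζ)‖ = ‖-ζ - x‖ := norm_sub_rev _ _
          linarith
    -- the inner product splitting
    have hsplit : ⟪p Sy, y⟫ + ⟪p Sx, x⟫ =
        ⟪p Sy - p Sx, y - x⟫/2 + ⟪p Sy + p Sx, y + x⟫/2 := by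
      simp only [inner_sub_left, inner_sub_right, inner_add_left, inner_add_right]
      ring
    have hb1 : ⟪p Sy + p Sx, y + x⟫ ≤ 2*Mp * (2*ρ) := by
      calc ⟪p Sy + p Sx, y + x⟫ ≤ ‖p Sy + p Sx‖ * ‖y + x‖ := real_inner_le_norm _ _
      _ ≤ (2*Mp) * (2*ρ) := by
          apply mul_le_mul _ hyx2 (norm_nonneg _) (by linarith)
          calc ‖p Sy + p Sx‖ ≤ ‖p Sy‖ + ‖p Sx‖ := norm_add_le _ _
          _ ≤ 2*Mp := by
              have := hMple Sy hSyK; have := hMple Sx hSxK; linarith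
    have hb2 : ⟪p Sy - p Sx, y - x⟫ ≤ Sg * (r + 2*ρ) := by
      calc ⟪p Sy - p Sx, y - x⟫ ≤ Sg * ‖y - x‖ := hchain
      _ ≤ Sg * (r + 2*ρ) := mul_le_mul_of_nonneg_left hyx hSg0
    have hc1 : ⟪w', ζ⟫ ≤ ⟪p Sy, y⟫ + ‖w'‖ * ρ := by
      have h1 : ⟪w', ζ - y⟫ ≤ ‖w'‖ * ‖ζ - y‖ := real_inner_le_norm _ _
      have h2 : ⟪w', ζ⟫ = ⟪w', y⟫ + ⟪w', ζ - y⟫ := by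
        rw [inner_sub_right]; ring
      have h3 : ‖w'‖ * ‖ζ - y‖ ≤ ‖w'‖ * ρ := mul_le_mul_of_nonneg_left hd1.le (norm_nonneg _)
      linarith
    have hc2 : ⟪w, -ζ⟫ ≤ ⟪p Sx, x⟫ + ‖w‖ * ρ := by
      have h1 : ⟪w, -ζ - x⟫ ≤ ‖w‖ * ‖-ζ - x‖ := real_inner_le_norm _ _
      have h2 : ⟪w, -ζ⟫ = ⟪w, x⟫ + ⟪w, -ζ - x⟫ := by
        rw [inner_sub_right]; ring
      have h3 : ‖w‖ * ‖-ζ - x‖ ≤ ‖w‖ * ρ := mul_le_mul_of_nonneg_left hd2.le (norm_nonneg _)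
      linarith
    have hfin : ⟪u, ζ⟫ = ⟪w', ζ⟫ + ⟪w, -ζ⟫ := by
      rw [hu, inner_sub_left, inner_neg_right]
      ring
    have hρnn : 0 ≤ ρ := hρ0.le
    have hw0 : 0 ≤ ‖w‖ := norm_nonneg _
    have hw'0 : 0 ≤ ‖w'‖ := norm_nonneg _
    have hwρ : ‖w‖ * ρ ≤ ‖w‖ * ε := mul_le_mul_of_nonneg_left hρε hw0
    have hw'ρ : ‖w'‖ * ρ ≤ ‖w'‖ * ε := mul_le_mul_of_nonneg_left hρε hw'0
    have hSgρ : Sg * ρ ≤ Sg * ε := mul_le_mul_of_nonneg_left hρε hSg0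
    have hMpρ : Mp * ρ ≤ Mp * ε := mul_le_mul_of_nonneg_left hρε hMp0
    linarith [hb2, hb1, hc1, hc2]
  -- conclude
  have hconc : ⟪u, ζ⟫ - Sg * (r/2) ≤ 0 :=
    aux_eps _ _ (r/4) (by linarith) hkey
  have hval : ⟪u, ζ⟫ = (r/2) * ‖u‖ := by
    rw [hζ, real_inner_smul_right, real_inner_smul_right, real_inner_self_eq_norm_mul_norm]
    field_simp
  rw [hval] at hconc
  have : (r/2) * ‖u‖ ≤ (r/2) * Sg := by linarith
  have := le_of_mul_le_mul_left this (by linarith : (0:ℝ) < r/2)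
  rwa [hu] at this

end Aux

/-- **Measure of the subdifferential controlled by the jumps.**
There is a constant `C = C(d)` such that, for any star whose `(d−1)`-faces containing `0`
are each shared by exactly two simplices, the Lebesgue measure of the local subdifferential
satisfies `|∂γ(0)| ≤ C (∑_{F ∈ ℱ(0)} J_F(γ))^d`, where `J_F(γ)` is the jump of the
gradient of `γ` across `F`. -/
theorem stmt_19 (d : ℕ) (hd : 2 ≤ d) :
    ∃ C : ℝ, 0 < C ∧
      ∀ (st : StarSetup d) (ℱ : Finset (Finset (EuclideanSpace ℝ (Fin d))))
        (J : Finset (EuclideanSpace ℝ (Fin d)) → ℝ),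
        (∀ F : Finset (EuclideanSpace ℝ (Fin d)), F ∈ ℱ ↔ st.IsFace F ∧ F.card = d - 1) →
        (∀ F ∈ ℱ, ∃ Sp ∈ st.K, ∃ Sm ∈ st.K, Sp ≠ Sm ∧ F ⊆ Sp ∧ F ⊆ Sm ∧
          (∀ S' ∈ st.K, F ⊆ S' → S' = Sp ∨ S' = Sm) ∧
          ∃ (n pp pm : EuclideanSpace ℝ (Fin d)) (cp cm : ℝ), ‖n‖ = 1 ∧
            (∀ z ∈ (F : Set (EuclideanSpace ℝ (Fin d))), ⟪n, z⟫ = 0) ∧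
            (∀ x ∈ splx Sp, ⟪n, x⟫ ≤ 0) ∧ (∀ x ∈ splx Sm, 0 ≤ ⟪n, x⟫) ∧
            (∀ x ∈ splx Sp, st.γ x = ⟪pp, x⟫ + cp) ∧
            (∀ x ∈ splx Sm, st.γ x = ⟪pm, x⟫ + cm) ∧
            J F = ⟪pm - pp, n⟫) →
        (volume st.subdiff).toReal ≤ C * (∑ F ∈ ℱ, J F) ^ d := by
  classical
  set B : ℝ := (volume (ball (0:EuclideanSpace ℝ (Fin d)) 1)).toReal with hB
  have hB0 : 0 ≤ B := ENNReal.toReal_nonneg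
  refine ⟨B + 1, by linarith, ?_⟩
  intro st ℱ J hℱ hyp
  choose! p c hpc using st.affine_on
  have hp : ∀ S ∈ st.K, ∀ z ∈ splx S, st.γ z = ⟪p S, z⟫ := by
    intro S hS z hz
    have h := hpc S hS z hz
    rwa [aux_c_zero st (hpc S hS), add_zero] at h
  set Sg : ℝ := ∑ F ∈ ℱ, J F with hSg
  have hJnn : ∀ F ∈ ℱ, 0 ≤ J F := by
    intro F hF
    obtain ⟨Sp, hSp, Sm, hSm, hne, hFSp, hFSm, huniq, n, pp, pm, cp, cm, hn, horth,
      hsignp, hsignm, hrepp, hrepm, hJdef⟩ := hyp F hF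
    obtain ⟨-, hFcard⟩ := (hℱ F).mp hF
    have horth' : ∀ z ∈ F, ⟪n, z⟫ = 0 := fun z hz => horth z (by exact_mod_cast hz)
    have hcp : cp = 0 := aux_c_zero st hrepp
    have hcm : cm = 0 := aux_c_zero st hrepm
    have hv : ∀ z ∈ F, ⟪pm - pp, z⟫ = 0 := by
      intro z hz
      have h1 := hrepp z (aux_vertex_mem_splx (hFSp hz))
      have h2 := hrepm z (aux_vertex_mem_splx (hFSm hz))
      rw [inner_sub_left]
      rw [hcp] at h1; rw [hcm] at h2
      linarith
    have hdec : pm - pp = ⟪pm - pp, n⟫ • n :=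
      aux_jump_decomp st hSp hFSp hFcard hd hn horth' hv
    have hbex : ∃ b ∈ splx Sm, 0 < ⟪n, b⟫ := by
      by_contra hb
      push_neg at hb
      have hz : ∀ z ∈ (Sm : Set (EuclideanSpace ℝ (Fin d))), ⟪n, z⟫ = 0 := by
        intro z hzz
        have h1 : z ∈ splx Sm := aux_vertex_mem_splx hzz
        exact le_antisymm (hb z h1) (hsignm z h1)
      have h0 := aux_inner_zero (aux_span_top st hSm) hz
      rw [h0] at hn
      simp at hn
    obtain ⟨b, hbmem, hbpos⟩ := hbex
    have hmin := aux_minorant st hSp hrepp b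
    have hγb := hrepm b hbmem
    have h0 : 0 ≤ ⟪pm - pp, b⟫ := by
      rw [inner_sub_left]
      rw [hcp] at hmin; rw [hcm] at hγb
      linarith
    rw [hdec, real_inner_smul_left] at h0
    rw [hJdef]
    by_contra hneg
    push_neg at hneg
    nlinarith
  have hjump : ∀ S₁ ∈ st.K, ∀ S₂ ∈ st.K, S₁ ≠ S₂ → (S₁ ∩ S₂).card = d - 1 →
      (S₁ ∩ S₂) ∈ ℱ ∧ ‖p S₂ - p S₁‖ ≤ J (S₁ ∩ S₂) := by
    intro S₁ h1 S₂ h2 hne hcard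
    have hFmem : (S₁ ∩ S₂) ∈ ℱ := (hℱ _).mpr ⟨⟨S₁, h1, Finset.inter_subset_left⟩, hcard⟩
    refine ⟨hFmem, ?_⟩
    obtain ⟨Sp, hSp, Sm, hSm, hnePM, hFSp, hFSm, huniq, n, pp, pm, cp, cm, hn, horth,
      hsignp, hsignm, hrepp, hrepm, hJdef⟩ := hyp _ hFmem
    have horth' : ∀ z ∈ S₁ ∩ S₂, ⟪n, z⟫ = 0 := fun z hz => horth z (by exact_mod_cast hz)
    have hcp : cp = 0 := aux_c_zero st hrepp
    have hcm : cm = 0 := aux_c_zero st hrepm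
    have hv : ∀ z ∈ S₁ ∩ S₂, ⟪pm - pp, z⟫ = 0 := by
      intro z hz
      have h1' := hrepp z (aux_vertex_mem_splx (hFSp hz))
      have h2' := hrepm z (aux_vertex_mem_splx (hFSm hz))
      rw [inner_sub_left]
      rw [hcp] at h1'; rw [hcm] at h2'
      linarith
    have hdec : pm - pp = ⟪pm - pp, n⟫ • n :=
      aux_jump_decomp st hSp hFSp hcard hd hn horth' hv
    have hpSp : p Sp = pp := aux_rep_unique st hSp (hpc Sp hSp) hrepp
    have hpSm : p Sm = pm := aux_rep_unique st hSm (hpc Sm hSm) hrepm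
    have hnorm : ‖pm - pp‖ = J (S₁ ∩ S₂) := by
      rw [hdec, norm_smul, hn, mul_one, ← hJdef, Real.norm_eq_abs,
        abs_of_nonneg (hJnn _ hFmem)]
    have hc1 := huniq S₁ h1 Finset.inter_subset_left
    have hc2 := huniq S₂ h2 Finset.inter_subset_right
    rcases hc1 with rfl | rfl <;> rcases hc2 with rfl | rfl
    · exact absurd rfl hne
    · rw [hpSp, hpSm, hnorm]
    · rw [hpSp, hpSm]
      rw [← hnorm, norm_sub_rev]
    · exact absurd rfl hne
  have hSg0 : 0 ≤ Sg := Finset.sum_nonneg hJnn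
  rcases Set.eq_empty_or_nonempty st.subdiff with hemp | ⟨w₀, hw₀⟩
  · rw [hemp, measure_empty]
    simp only [ENNReal.toReal_zero]
    have := pow_nonneg hSg0 d
    nlinarith
  · have hsub : st.subdiff ⊆ closedBall w₀ Sg := by
      intro w' hw'
      rw [mem_closedBall, dist_eq_norm]
      exact aux_diam st hd p hp ℱ J hJnn hjump hw₀ hw'
    have hle : volume st.subdiff ≤ volume (closedBall w₀ Sg) := measure_mono hsub
    rw [Measure.addHaar_closedBall volume w₀ hSg0] at hle
    have hfin : (ENNReal.ofReal (Sg ^ (Module.finrank ℝ (EuclideanSpace ℝ (Fin d)))) *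
        volume (ball (0:EuclideanSpace ℝ (Fin d)) 1)) ≠ ⊤ :=
      ENNReal.mul_ne_top ENNReal.ofReal_ne_top measure_ball_lt_top.ne
    have hmono := ENNReal.toReal_mono hfin hle
    rw [ENNReal.toReal_mul, ENNReal.toReal_ofReal (by positivity),
      finrank_euclideanSpace_fin] at hmono
    calc (volume st.subdiff).toReal ≤ Sg ^ d * B := hmono
    _ ≤ (B + 1) * Sg ^ d := by nlinarith [pow_nonneg hSg0 d]

end
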